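/- arXiv:1803.05523 — 6 statements merged into one kernel-verified Lean document; each statement's English description precedes it below -/
import Mathlib

section
/- Let I be an interval containing 0 and f : I → ℝ satisfy 0 < f(x) < x for x > 0, with f differentiable at 0. If for some a > 0 the limit as x→0⁺ of (x^a − f(x)^a)/(x^a f(x)^a) exists (and is finite), then f'(0) = 1. -/
open Filter Topology

theorem stmt2 (f : ℝ → ℝ) (hf : ∀ x > (0:ℝ), 0 < f x ∧ f x < x)
    (hd : DifferentiableAt ℝ f 0) (a : ℝ) (ha : 0 < a)
    (hlim : ∃ L : ℝ, Tendsto (fun x : ℝ => (x ^ a - (f x) ^ a) / (x ^ a * (f x) ^ a))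
      (𝓝[>] 0) (𝓝 L)) :
    deriv f 0 = 1 := by
  have hmem : ∀ᶠ x in 𝓝[>] (0:ℝ), 0 < x := self_mem_nhdsWithin
  have hf0 : f 0 = 0 := by
    have h1 : Tendsto f (𝓝[>] (0:ℝ)) (𝓝 0) := by
      refine squeeze_zero' (hmem.mono fun x hx => (hf x hx).1.le)
        (hmem.mono fun x hx => (hf x hx).2.le) ?_
      exact tendsto_id.mono_left nhdsWithin_le_nhds
    have h2 : Tendsto f (𝓝[>] (0:ℝ)) (𝓝 (f 0)) :=
      hd.continuousAt.tendsto.mono_left nhdsWithin_le_nhds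
    exact tendsto_nhds_unique h2 h1
  have hslope : Tendsto (fun x => f x / x) (𝓝[>] (0:ℝ)) (𝓝 (deriv f 0)) := by
    have h := hasDerivAt_iff_tendsto_slope.1 hd.hasDerivAt
    have h2 := h.mono_left (nhdsWithin_mono 0 (fun x hx => ne_of_gt hx))
    refine h2.congr' (hmem.mono fun x hx => ?_)
    simp [slope_def_field, hf0]
  have hd1 : deriv f 0 ≤ 1 := le_of_tendsto hslope (hmem.mono fun x hx =>
    (div_le_one hx).2 (hf x hx).2.le)
  have hd0 : 0 ≤ deriv f 0 := ge_of_tendsto hslope (hmem.mono fun x hx =>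
    div_nonneg (hf x hx).1.le hx.le)
  by_contra hne
  have hlt : deriv f 0 < 1 := lt_of_le_of_ne hd1 hne
  set d := deriv f 0 with hdd
  set c : ℝ := (d + 1) / 2 with hc
  have hc0 : 0 < c := by rw [hc]; linarith
  have hc1 : c < 1 := by rw [hc]; linarith
  have hdc : d < c := by rw [hc]; linarith
  have hca : c ^ a < 1 := Real.rpow_lt_one hc0.le hc1 ha
  have hKpos : 0 < 1 - c ^ a := by linarith
  have hev : ∀ᶠ x in 𝓝[>] (0:ℝ), f x / x < c := hslope.eventually_lt_const hdc
  obtain ⟨L, hL⟩ := hlim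
  have hbound : ∀ᶠ x in 𝓝[>] (0:ℝ),
      (1 - c ^ a) / x ^ a ≤ (x ^ a - f x ^ a) / (x ^ a * f x ^ a) := by
    filter_upwards [hmem, hev] with x hx hfx
    have hfx0 : 0 < f x := (hf x hx).1
    have hfc : f x < c * x := (div_lt_iff₀ hx).1 hfx
    have hxa : 0 < x ^ a := Real.rpow_pos_of_pos hx a
    have hfa : 0 < f x ^ a := Real.rpow_pos_of_pos hfx0 a
    have h1 : f x ^ a ≤ (c * x) ^ a := Real.rpow_le_rpow hfx0.le hfc.le ha.le
    have h2 : (c * x) ^ a = c ^ a * x ^ a := Real.mul_rpow hc0.le hx.le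
    have hB : f x ^ a ≤ c ^ a * x ^ a := h2 ▸ h1
    have h3 : f x ^ a ≤ x ^ a := Real.rpow_le_rpow hfx0.le (hf x hx).2.le ha.le
    rw [div_le_div_iff₀ hxa (mul_pos hxa hfa)]
    nlinarith [mul_le_mul_of_nonneg_left hB hxa.le,
      mul_le_mul_of_nonneg_left h3 hKpos.le, hxa, hfa]
  have hpow : Tendsto (fun x : ℝ => x ^ a) (𝓝[>] (0:ℝ)) (𝓝[>] (0:ℝ)) := by
    rw [tendsto_nhdsWithin_iff]
    constructor
    · have h : Tendsto (fun x : ℝ => x ^ a) (𝓝 0) (𝓝 ((0:ℝ) ^ a)) :=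
        (Real.continuousAt_rpow_const 0 a (Or.inr ha.le)).tendsto
      rw [Real.zero_rpow ha.ne'] at h
      exact h.mono_left nhdsWithin_le_nhds
    · exact hmem.mono fun x hx => Real.rpow_pos_of_pos hx a
  have hinv : Tendsto (fun x : ℝ => (x ^ a)⁻¹) (𝓝[>] (0:ℝ)) atTop :=
    tendsto_inv_nhdsGT_zero.comp hpow
  have htop : Tendsto (fun x : ℝ => (1 - c ^ a) / x ^ a) (𝓝[>] (0:ℝ)) atTop := by
    simpa [div_eq_mul_inv] using hinv.const_mul_atTop hKpos
  exact not_tendsto_atTop_of_tendsto_nhds hL (tendsto_atTop_mono' _ hbound htop)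
end

section
/- Suppose f is real analytic on a neighborhood of 0 with f(0)=0, f'(0)=1, and 0 < f(x) < x for small x > 0. If for some a > 0 the limit as x→0⁺ of (x^a − f(x)^a)/(x^a f(x)^a) exists and is a positive real number, then a ≥ 1. -/
open Filter Topology

set_option maxHeartbeats 1000000 in
theorem stmt4 (f : ℝ → ℝ) (han : AnalyticAt ℝ f 0) (hf0 : f 0 = 0)
    (hd : deriv f 0 = 1) (δ : ℝ) (hδ : 0 < δ)
    (hf : ∀ x ∈ Set.Ioo (0:ℝ) δ, 0 < f x ∧ f x < x)
    (a L : ℝ) (ha : 0 < a) (hL : 0 < L)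
    (hlim : Tendsto (fun x : ℝ => (x ^ a - (f x) ^ a) / (x ^ a * (f x) ^ a)) (𝓝[>] 0) (𝓝 L)) :
    1 ≤ a := by
  by_contra hcon
  push_neg at hcon
  -- f analytic on a ball around 0
  obtain ⟨ε, hε, hball⟩ := Metric.eventually_nhds_iff.mp han.eventually_analyticAt
  have hfan : AnalyticOnNhd ℝ f (Metric.ball (0:ℝ) ε) := fun y hy => hball (by simpa using hy)
  set g : ℝ → ℝ := fun x => x - f x with hgdef
  have hgan : AnalyticOnNhd ℝ g (Metric.ball (0:ℝ) ε) :=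
    analyticOnNhd_id.sub hfan
  have h0mem : (0:ℝ) ∈ Metric.ball (0:ℝ) ε := by simpa using hε
  -- derivative of g
  have hgd : ∀ y ∈ Metric.ball (0:ℝ) ε, HasDerivAt g (deriv g y) y :=
    fun y hy => ((hgan y hy).differentiableAt).hasDerivAt
  have hg'0 : deriv g 0 = 0 := by
    have h1 : HasDerivAt f (deriv f 0) 0 := (hfan 0 h0mem).differentiableAt.hasDerivAt
    have h2 : HasDerivAt g (1 - deriv f 0) 0 := (hasDerivAt_id 0).sub h1
    rw [h2.deriv, hd]; ring
  -- deriv g is differentiable at 0 (analytic)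
  set M : ℝ := deriv (deriv g) 0 with hMdef
  have hg'an : HasDerivAt (deriv g) M 0 :=
    ((hgan.deriv 0 h0mem).differentiableAt).hasDerivAt
  -- slope of deriv g tends to M; get bound |deriv g y| ≤ (|M|+1)*y for small y > 0
  have hslope : Tendsto (slope (deriv g) 0) (𝓝[≠] (0:ℝ)) (𝓝 M) :=
    hasDerivAt_iff_tendsto_slope.mp hg'an
  set C : ℝ := |M| + 1 with hCdef
  have hC : 0 < C := by positivity
  have hbd : ∀ᶠ y in 𝓝[≠] (0:ℝ), |deriv g y| ≤ C * |y| := by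
    have : ∀ᶠ y in 𝓝[≠] (0:ℝ), slope (deriv g) 0 y ∈ Set.Ioo (M - 1) (M + 1) :=
      hslope (Ioo_mem_nhds (by linarith) (by linarith))
    filter_upwards [this, self_mem_nhdsWithin] with y hy hy'
    have hyne : y ≠ 0 := hy'
    have hs : slope (deriv g) 0 y = deriv g y / y := by
      simp [slope_def_field, hg'0, div_eq_inv_mul]
    have h1 : |deriv g y / y| ≤ C := by
      rw [← hs]
      have h2 : |slope (deriv g) 0 y - M| ≤ 1 := by
        rw [abs_le]
        exact ⟨by linarith [hy.1], by linarith [hy.2]⟩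
      calc |slope (deriv g) 0 y| = |slope (deriv g) 0 y - M + M| := by ring_nf
        _ ≤ |slope (deriv g) 0 y - M| + |M| := abs_add_le _ _
        _ ≤ C := by rw [hCdef]; linarith
    calc |deriv g y| = |deriv g y / y| * |y| := by
          rw [← abs_mul, div_mul_cancel₀ _ hyne]
      _ ≤ C * |y| := by gcongr
  obtain ⟨ε₁, hε₁, hbd'⟩ := Metric.mem_nhdsWithin_iff.mp hbd
  -- f x / x → 1, so eventually f x ≥ x / 2
  have hfd : HasDerivAt f 1 0 := by
    have := (hfan 0 h0mem).differentiableAt.hasDerivAt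
    rwa [hd] at this
  have hfs : Tendsto (slope f 0) (𝓝[≠] (0:ℝ)) (𝓝 1) := hasDerivAt_iff_tendsto_slope.mp hfd
  have hhalf : ∀ᶠ x in 𝓝[>] (0:ℝ), x / 2 ≤ f x := by
    have hsub : 𝓝[>] (0:ℝ) ≤ 𝓝[≠] (0:ℝ) :=
      nhdsWithin_mono 0 fun x hx => ne_of_gt hx
    have : ∀ᶠ x in 𝓝[>] (0:ℝ), slope f 0 x ∈ Set.Ioi (1/2 : ℝ) :=
      (hfs.mono_left hsub) (Ioi_mem_nhds (by norm_num))
    filter_upwards [this, self_mem_nhdsWithin] with x hx hx'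
    have hx0 : (0:ℝ) < x := hx'
    have hs : slope f 0 x = f x / x := by simp [slope_def_field, hf0, div_eq_inv_mul]
    rw [hs, Set.mem_Ioi] at hx
    rw [lt_div_iff₀ hx0] at hx
    linarith
  -- key bound via MVT: x - f x ≤ C * x ^ 2 for small positive x
  set ε₂ : ℝ := min ε ε₁ with hε₂def
  have hε₂ : 0 < ε₂ := lt_min hε hε₁
  have hmem : ∀ y : ℝ, |y| < ε₂ → y ∈ Metric.ball (0:ℝ) ε := by
    intro y hy
    rw [Metric.mem_ball, Real.dist_eq, sub_zero]
    exact lt_of_lt_of_le hy (min_le_left _ _)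
  have hkey : ∀ x : ℝ, 0 < x → x < ε₂ → x - f x ≤ C * x ^ 2 := by
    intro x hx0 hxε
    have habs : ∀ y : ℝ, y ∈ Set.Icc (0:ℝ) x → |y| < ε₂ := by
      intro y hy
      rw [abs_lt]
      exact ⟨by linarith [hy.1], by linarith [hy.2]⟩
    have hcont : ContinuousOn g (Set.Icc 0 x) := fun y hy =>
      ((hgd y (hmem y (habs y hy))).continuousAt).continuousWithinAt
    obtain ⟨c, hc, hceq⟩ := exists_hasDerivAt_eq_slope g (deriv g) hx0 hcont
      (fun y hy => hgd y (hmem y (habs y (Set.mem_Icc_of_Ioo hy))))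
    have hg00 : g 0 = 0 := by simp [hgdef, hf0]
    have hcabs : |c| < ε₂ := habs c (Set.mem_Icc_of_Ioo hc)
    have hcb : |deriv g c| ≤ C * |c| := hbd' ⟨by
        rw [Metric.mem_ball, Real.dist_eq, sub_zero]
        exact lt_of_lt_of_le hcabs (min_le_right _ _), ne_of_gt hc.1⟩
    have hgx : g x = deriv g c * x := by
      rw [hceq, hg00]
      rw [sub_zero, sub_zero, div_mul_cancel₀ _ hx0.ne']
    have hc0 : 0 < c := hc.1
    have hcx : c < x := hc.2
    calc x - f x = g x := rfl
      _ = deriv g c * x := hgx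
      _ ≤ |deriv g c| * x := by
          have := le_abs_self (deriv g c)
          nlinarith
      _ ≤ (C * |c|) * x := by nlinarith
      _ ≤ C * x ^ 2 := by
          rw [abs_of_pos hc0]
          nlinarith [mul_pos hC (mul_pos (sub_pos.mpr hcx) hx0)]
  -- the squeeze
  have hupper : ∀ᶠ x in 𝓝[>] (0:ℝ),
      (x ^ a - f x ^ a) / (x ^ a * f x ^ a) ≤ 2 * C * x ^ (1 - a) := by
    have hsmall : ∀ᶠ x in 𝓝[>] (0:ℝ), x < min δ ε₂ :=
      eventually_nhdsWithin_of_eventually_nhds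
        (Filter.Tendsto.eventually_lt_const (lt_min hδ hε₂) tendsto_id)
    filter_upwards [hsmall, hhalf, self_mem_nhdsWithin] with x hxs hxh hx0'
    have hx0 : (0:ℝ) < x := hx0'
    have hxδ : x < δ := lt_of_lt_of_le hxs (min_le_left _ _)
    have hxε₂ : x < ε₂ := lt_of_lt_of_le hxs (min_le_right _ _)
    obtain ⟨hfx0, hfxx⟩ := hf x ⟨hx0, hxδ⟩
    have hxa : (0:ℝ) < x ^ a := Real.rpow_pos_of_pos hx0 a
    have hfa : (0:ℝ) < f x ^ a := Real.rpow_pos_of_pos hfx0 a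
    have h1 : x ^ (a - 1) ≤ f x ^ (a - 1) :=
      Real.rpow_le_rpow_of_nonpos hfx0 hfxx.le (by linarith)
    have hxsub : x ^ (a - 1) = x ^ a / x := by rw [Real.rpow_sub hx0, Real.rpow_one]
    have hfsub : f x ^ (a - 1) = f x ^ a / f x := by rw [Real.rpow_sub hfx0, Real.rpow_one]
    have hkey2 : x ^ a * f x ≤ f x ^ a * x := by
      rw [hxsub, hfsub, div_le_div_iff₀ hx0 hfx0] at h1
      linarith
    have hb1 : (x ^ a - f x ^ a) / (x ^ a * f x ^ a) ≤ (x - f x) / (f x * x ^ a) := by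
      rw [div_le_div_iff₀ (by positivity) (by positivity)]
      nlinarith [mul_nonneg hxa.le (sub_nonneg.mpr hkey2)]
    have hb2 : (x - f x) / (f x * x ^ a) ≤ (C * x ^ 2) / ((x / 2) * x ^ a) := by
      apply div_le_div₀ (by positivity) (hkey x hx0 hxε₂) (by positivity)
      have := hxh
      nlinarith [hxa]
    have hb3 : (C * x ^ 2) / ((x / 2) * x ^ a) = 2 * C * x ^ (1 - a) := by
      rw [Real.rpow_sub hx0, Real.rpow_one]
      field_simp
    linarith [hb1, hb2, hb3.le]
  have hlower : ∀ᶠ x in 𝓝[>] (0:ℝ),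
      0 ≤ (x ^ a - f x ^ a) / (x ^ a * f x ^ a) := by
    have hsmall : ∀ᶠ x in 𝓝[>] (0:ℝ), x < δ :=
      eventually_nhdsWithin_of_eventually_nhds
        (Filter.Tendsto.eventually_lt_const hδ tendsto_id)
    filter_upwards [hsmall, self_mem_nhdsWithin] with x hxδ hx0'
    have hx0 : (0:ℝ) < x := hx0'
    obtain ⟨hfx0, hfxx⟩ := hf x ⟨hx0, hxδ⟩
    have hnum : 0 ≤ x ^ a - f x ^ a := by
      have := Real.rpow_le_rpow hfx0.le hfxx.le ha.le
      linarith
    have hden : 0 ≤ x ^ a * f x ^ a := by positivity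
    exact div_nonneg hnum hden
  have hzero : Tendsto (fun x : ℝ => 2 * C * x ^ (1 - a)) (𝓝[>] (0:ℝ)) (𝓝 0) := by
    have h1 : Tendsto (fun x : ℝ => x ^ (1 - a)) (𝓝 (0:ℝ)) (𝓝 ((0:ℝ) ^ (1 - a))) :=
      (Real.continuousAt_rpow_const 0 (1 - a) (Or.inr (by linarith))).tendsto
    rw [Real.zero_rpow (by intro h; linarith [h] : (1 - a) ≠ 0)] at h1
    have h2 := (h1.const_mul (2 * C)).mono_left (nhdsWithin_le_nhds : 𝓝[>] (0:ℝ) ≤ 𝓝 0)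
    simpa using h2
  have hL0 : Tendsto (fun x : ℝ => (x ^ a - f x ^ a) / (x ^ a * f x ^ a))
      (𝓝[>] (0:ℝ)) (𝓝 0) := squeeze_zero' hlower hupper hzero
  have : L = 0 := tendsto_nhds_unique hlim hL0
  linarith
end

section
/- For 0 < a < 1, c > 0, and x_0 > 0, with g(x) = x/(1+c·x^a)^{1/a}, the series ∑_{n=1}^∞ gⁿ(x_0) converges. -/
theorem stmt12 (a c x₀ : ℝ) (ha0 : 0 < a) (ha1 : a < 1) (hc : 0 < c) (hx₀ : 0 < x₀)
    (g : ℝ → ℝ) (hg : ∀ x : ℝ, g x = x / (1 + c * x ^ a) ^ a⁻¹) :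
    Summable (fun n : ℕ => g^[n] x₀) := by
  set b := c * x₀ ^ a with hb
  have hbpos : 0 < b := mul_pos hc (Real.rpow_pos_of_pos hx₀ a)
  have ha_inv : 1 < a⁻¹ := (one_lt_inv₀ ha0).mpr ha1
  have key : ∀ n : ℕ, g^[n] x₀ = x₀ * (1 + n * b) ^ (-a⁻¹) := by
    intro n
    induction n with
    | zero => simp
    | succ n ih =>
      have hpos : (0:ℝ) < 1 + n * b := by positivity
      have hpos' : (0:ℝ) < 1 + ((n:ℝ)+1) * b := by positivity
      rw [Function.iterate_succ_apply', ih, hg]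
      have hy : (x₀ * (1 + n * b) ^ (-a⁻¹)) ^ a = x₀ ^ a * (1 + n * b)⁻¹ := by
        rw [Real.mul_rpow hx₀.le (Real.rpow_nonneg hpos.le _),
            ← Real.rpow_mul hpos.le, neg_mul, inv_mul_cancel₀ ha0.ne',
            Real.rpow_neg_one]
      rw [hy]
      have h1 : 1 + c * (x₀ ^ a * (1 + n * b)⁻¹)
          = (1 + ((n:ℝ)+1) * b) / (1 + n * b) := by
        field_simp
        ring
      rw [h1, Real.div_rpow hpos'.le hpos.le]
      have e1 : (0:ℝ) < (1 + n * b) ^ a⁻¹ := Real.rpow_pos_of_pos hpos _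
      have e2 : (0:ℝ) < (1 + ((n:ℝ)+1) * b) ^ a⁻¹ := Real.rpow_pos_of_pos hpos' _
      push_cast
      rw [Real.rpow_neg hpos.le, Real.rpow_neg hpos'.le]
      field_simp
  set m := min 1 b with hm
  have hmpos : 0 < m := lt_min one_pos hbpos
  have hbase : Summable (fun n : ℕ => (((n:ℝ)+1) * m) ^ (-a⁻¹)) := by
    have hs : Summable (fun n : ℕ => (n:ℝ) ^ (-a⁻¹)) :=
      Real.summable_nat_rpow.mpr (by linarith)
    have hs' : Summable (fun n : ℕ => ((n+1:ℕ):ℝ) ^ (-a⁻¹)) :=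
      (summable_nat_add_iff 1).mpr hs
    have := hs'.mul_left (m ^ (-a⁻¹))
    refine this.congr fun n => ?_
    rw [mul_comm ((n:ℝ)+1) m, Real.mul_rpow hmpos.le (by positivity)]
    push_cast
    ring
  have hsum : Summable (fun n : ℕ => x₀ * (1 + n * b) ^ (-a⁻¹)) := by
    apply Summable.mul_left
    apply Summable.of_nonneg_of_le (fun n => Real.rpow_nonneg (by positivity) _)
      (fun n => ?_) hbase
    apply Real.rpow_le_rpow_of_nonpos (by positivity) (by
        have h1 : m ≤ 1 := min_le_left _ _
        have h2 : m ≤ b := min_le_right _ _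
        have h3 : (0:ℝ) ≤ (n:ℝ) := Nat.cast_nonneg n
        nlinarith)
      (neg_nonpos.mpr (by positivity))
  exact hsum.congr fun n => (key n).symm
end

section
/- For a ≥ 1, c > 0, and x_0 > 0, with g(x) = x/(1+c·x^a)^{1/a}, the series ∑_{n=1}^∞ gⁿ(x_0) diverges. -/
theorem stmt14 (a c x₀ : ℝ) (ha : 1 ≤ a) (hc : 0 < c) (hx₀ : 0 < x₀)
    (g : ℝ → ℝ) (hg : ∀ x : ℝ, g x = x / (1 + c * x ^ a) ^ a⁻¹) :
    ¬ Summable (fun n : ℕ => g^[n] x₀) := by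
  have ha0 : (0:ℝ) < a := lt_of_lt_of_le one_pos ha
  have ha0' : a ≠ 0 := ne_of_gt ha0
  set A := c * x₀ ^ a with hA
  have hApos : 0 < A := mul_pos hc (Real.rpow_pos_of_pos hx₀ a)
  -- denominator positivity
  have hden : ∀ n : ℕ, (0:ℝ) < 1 + n * A := fun n => by positivity
  -- closed form
  have key : ∀ n : ℕ, g^[n] x₀ = x₀ / (1 + n * A) ^ a⁻¹ := by
    intro n
    induction n with
    | zero => simp
    | succ n ih =>
      have hdn := hden n
      have hdn1 := hden (n+1)
      have hdnpow : (0:ℝ) < (1 + n * A) ^ a⁻¹ := Real.rpow_pos_of_pos hdn _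
      rw [Function.iterate_succ_apply', ih, hg]
      push_cast
      push_cast at hdn1
      have hya : (x₀ / (1 + n * A) ^ a⁻¹) ^ a = x₀ ^ a / (1 + n * A) := by
        rw [Real.div_rpow hx₀.le hdnpow.le, Real.rpow_inv_rpow hdn.le ha0']
      rw [hya]
      have h1 : 1 + c * (x₀ ^ a / (1 + n * A)) = (1 + (n+1) * A) / (1 + n * A) := by
        field_simp
        ring
      rw [h1, Real.div_rpow hdn1.le hdn.le]
      have h2 : (0:ℝ) < (1 + ((n:ℝ)+1) * A) ^ a⁻¹ := Real.rpow_pos_of_pos hdn1 _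
      field_simp
  -- lower bound by harmonic-type series
  set M := max 1 A with hM
  have hM1 : (1:ℝ) ≤ M := le_max_left _ _
  have hMpos : (0:ℝ) < M := lt_of_lt_of_le one_pos hM1
  have hMa : (0:ℝ) < M ^ a⁻¹ := Real.rpow_pos_of_pos hMpos _
  set K := x₀ / M ^ a⁻¹ with hK
  have hKpos : 0 < K := div_pos hx₀ hMa
  have bound : ∀ n : ℕ, K * (1 / ((n:ℝ) + 1)) ≤ g^[n] x₀ := by
    intro n
    rw [key n]
    have hdn := hden n
    have hle : 1 + (n:ℝ) * A ≤ ((n:ℝ) + 1) * M := by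
      have h1 : (1:ℝ) ≤ M := hM1
      have h2 : A ≤ M := le_max_right _ _
      have hn : (0:ℝ) ≤ (n:ℝ) := Nat.cast_nonneg n
      nlinarith
    have hstep : (1 + (n:ℝ) * A) ^ a⁻¹ ≤ ((n:ℝ) + 1) * M ^ a⁻¹ := by
      calc (1 + (n:ℝ) * A) ^ a⁻¹ ≤ (((n:ℝ) + 1) * M) ^ a⁻¹ :=
            Real.rpow_le_rpow hdn.le hle (by positivity)
        _ = ((n:ℝ) + 1) ^ a⁻¹ * M ^ a⁻¹ := Real.mul_rpow (by positivity) hMpos.le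
        _ ≤ ((n:ℝ) + 1) * M ^ a⁻¹ := by
            have h1 : ((n:ℝ) + 1) ^ a⁻¹ ≤ ((n:ℝ) + 1) ^ (1:ℝ) :=
              Real.rpow_le_rpow_of_exponent_le
                (by have := Nat.cast_nonneg (α := ℝ) n; linarith)
                (by rw [inv_le_one_iff₀]; right; exact ha)
            rw [Real.rpow_one] at h1
            exact mul_le_mul_of_nonneg_right h1 hMa.le
    have hdenpos : (0:ℝ) < (1 + (n:ℝ) * A) ^ a⁻¹ := Real.rpow_pos_of_pos hdn _
    rw [hK, div_mul_eq_mul_div, mul_one_div, div_div]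
    gcongr
  intro hs
  have hs2 : Summable (fun n : ℕ => K * (1 / ((n:ℝ) + 1))) := by
    refine Summable.of_nonneg_of_le (fun n => by positivity) bound hs
  have hs3 : Summable (fun n : ℕ => 1 / ((n:ℝ) + 1)) :=
    (summable_mul_left_iff (ne_of_gt hKpos)).mp hs2
  have hs4 : Summable (fun n : ℕ => 1 / ((n:ℕ) + 1 : ℝ)) := by
    exact_mod_cast hs3
  have : Summable (fun n : ℕ => (1:ℝ) / n) := by
    have := (summable_nat_add_iff (f := fun n : ℕ => (1:ℝ) / n) 1).mp (by push_cast; exact hs3)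
    exact this
  exact Real.not_summable_one_div_natCast this
end

section
/- Suppose f : ℝ → ℝ satisfies f(0)=0 and |f(x)| ≤ c|x| for all x in some interval (−ε,ε), where 0 ≤ c < 1 and ε > 0, and |f(x)| < |x| for all x ≠ 0. Then for any x_0, the series ∑_{n=0}^∞ fⁿ(x_0) is absolutely convergent, provided the iterates eventually enter (−ε,ε). -/
theorem stmt16 (f : ℝ → ℝ) (hf0 : f 0 = 0)
    (hlt : ∀ x : ℝ, x ≠ 0 → |f x| < |x|)
    (ε c : ℝ) (hε : 0 < ε) (hc0 : 0 ≤ c) (hc1 : c < 1)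
    (hmaj : ∀ x ∈ Set.Ioo (-ε) ε, |f x| ≤ c * |x|)
    (x₀ : ℝ) (N : ℕ) (hN : |f^[N] x₀| < ε) :
    Summable (fun n : ℕ => |f^[n] x₀|) := by
  have key : ∀ k : ℕ, |f^[N + k] x₀| ≤ c ^ k * |f^[N] x₀| := by
    intro k
    induction k with
    | zero => simp
    | succ k ih =>
      have hlt' : |f^[N + k] x₀| < ε :=
        lt_of_le_of_lt (ih.trans (by
          nlinarith [abs_nonneg (f^[N] x₀), pow_le_one₀ hc0 hc1.le (n := k)])) hN
      have hmem : f^[N + k] x₀ ∈ Set.Ioo (-ε) ε := by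
        rw [Set.mem_Ioo, ← abs_lt]; exact hlt'
      have h2 := hmaj _ hmem
      have : f^[N + (k + 1)] x₀ = f (f^[N + k] x₀) := by
        rw [show N + (k+1) = (N+k)+1 from rfl, Function.iterate_succ_apply' f (N + k) x₀]
      rw [this]
      calc |f (f^[N + k] x₀)| ≤ c * |f^[N + k] x₀| := h2
        _ ≤ c * (c ^ k * |f^[N] x₀|) := by nlinarith
        _ = c ^ (k + 1) * |f^[N] x₀| := by ring
  rw [← summable_nat_add_iff N]
  apply Summable.of_nonneg_of_le (fun k => abs_nonneg _) (fun k => by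
    simpa [add_comm] using key k)
  exact (summable_geometric_of_lt_one hc0 hc1).mul_right _
end

section
/- Suppose f : (0,∞) → (0,∞) satisfies f(x) < x for all x > 0, and there exist a,k > 0 such that the limit as x→0⁺ of (x^a − f(x)^a)/(x^a f(x)^a) equals 1/k^a. Then there exist c > 0 and δ > 0 such that f(x) ≤ x/(1 + c x^a)^{1/a} for all x ∈ (0,δ). -/
open Filter Topology

theorem stmt17 (f : ℝ → ℝ) (hf : ∀ x > (0:ℝ), 0 < f x ∧ f x < x)
    (a k : ℝ) (ha : 0 < a) (hk : 0 < k)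
    (hlim : Tendsto (fun x : ℝ => (x ^ a - (f x) ^ a) / (x ^ a * (f x) ^ a))
      (𝓝[>] 0) (𝓝 (1 / k ^ a))) :
    ∃ c > (0:ℝ), ∃ δ > (0:ℝ), ∀ x : ℝ, 0 < x → x < δ →
      f x ≤ x / (1 + c * x ^ a) ^ a⁻¹ := by
  have hka : (0:ℝ) < k ^ a := Real.rpow_pos_of_pos hk a
  set c : ℝ := 1 / (2 * k ^ a) with hc
  have hcpos : 0 < c := by positivity
  have hclt : c < 1 / k ^ a := by
    rw [hc, div_lt_div_iff₀ (by positivity) hka]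
    nlinarith
  have hev : ∀ᶠ x in 𝓝[>] (0:ℝ),
      c < (x ^ a - (f x) ^ a) / (x ^ a * (f x) ^ a) :=
    hlim.eventually (eventually_gt_nhds hclt)
  rw [eventually_nhdsWithin_iff, Metric.eventually_nhds_iff] at hev
  obtain ⟨δ, hδ, hδ'⟩ := hev
  refine ⟨c, hcpos, δ, hδ, fun x hx hxδ => ?_⟩
  have hdist : dist x 0 < δ := by
    rw [Real.dist_eq, sub_zero, abs_of_pos hx]; exact hxδ
  have hgt := hδ' hdist hx
  obtain ⟨hfpos, hflt⟩ := hf x hx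
  set u := x ^ a with hu
  set v := f x ^ a with hv
  have hupos : 0 < u := Real.rpow_pos_of_pos hx a
  have hvpos : 0 < v := Real.rpow_pos_of_pos hfpos a
  have h1 : c * (u * v) < u - v := by
    have := (lt_div_iff₀ (by positivity)).mp hgt
    linarith
  have hden : 0 < 1 + c * u := by positivity
  have hvle : v ≤ u / (1 + c * u) := by
    rw [le_div_iff₀ hden]; nlinarith
  have hfx : f x = v ^ a⁻¹ := by
    rw [hv, ← Real.rpow_mul hfpos.le, mul_inv_cancel₀ ha.ne', Real.rpow_one]
  have hxx : x = u ^ a⁻¹ := by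
    rw [hu, ← Real.rpow_mul hx.le, mul_inv_cancel₀ ha.ne', Real.rpow_one]
  calc f x = v ^ a⁻¹ := hfx
    _ ≤ (u / (1 + c * u)) ^ a⁻¹ :=
        Real.rpow_le_rpow hvpos.le hvle (by positivity)
    _ = u ^ a⁻¹ / (1 + c * u) ^ a⁻¹ := Real.div_rpow hupos.le hden.le a⁻¹
    _ = x / (1 + c * u) ^ a⁻¹ := by rw [← hxx]
end
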